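/- Let (A, φ) be an algebraic probability space and b ∈ A self-adjoint with φ(b) = 0 and φ(b²) = 1. For 1 ≤ n ≤ N and y ∈ A, let F^{(N,n)}(y) ∈ A^{⊗N} be the sum, over all ways to choose n distinct tensor positions and to place y at one of them and b at the other n−1 (with 1 elsewhere), of the corresponding elementary tensors. Then for every fixed n ≥ 1 and every integer m ≥ 1, lim_{N→∞} φ^{⊗N}( ( F^{(N,n)}(b²−1) / N^{(n+1)/2} )^m ) = 0; indeed φ^{⊗N}( (F^{(N,n)}(b²−1)/N^{(n+1)/2})^m ) = O(N^{-m/2}). -/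

import Mathlib

open scoped TensorProduct ComplexOrder
open Filter Topology

noncomputable section

/-- The product state `φ^{⊗N}` on the `N`-fold algebraic tensor power `A^{⊗N}`,
determined by `φ^{⊗N}(a_1 ⊗ ⋯ ⊗ a_N) = φ(a_1) ⋯ φ(a_N)`. -/
def prodState {A : Type*} [Ring A] [Algebra ℂ A] (φ : A →ₗ[ℂ] ℂ) (N : ℕ) :
    (⨂[ℂ] _ : Fin N, A) →ₗ[ℂ] ℂ :=
  PiTensorProduct.lift ((MultilinearMap.mkPiAlgebra ℂ (Fin N) ℂ).compLinearMap fun _ => φ)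

/-- `b(i) = 1 ⊗ ⋯ ⊗ b ⊗ ⋯ ⊗ 1 ∈ A^{⊗N}` with `b` at the `i`-th tensor factor. -/
def elemAt {A : Type*} [Ring A] [Algebra ℂ A] (b : A) (N : ℕ) (i : Fin N) :
    ⨂[ℂ] _ : Fin N, A :=
  PiTensorProduct.tprod ℂ (Function.update (fun _ => (1 : A)) i b)

/-- `b^{(N,n)} = ∑_{1 ≤ i_1 < ⋯ < i_n ≤ N} b(i_1) ⋯ b(i_n)` (and `b^{(N,0)} = 1`). -/
def bPow {A : Type*} [Ring A] [Algebra ℂ A] (b : A) (N n : ℕ) : ⨂[ℂ] _ : Fin N, A :=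
  ∑ s ∈ Finset.powersetCard n (Finset.univ : Finset (Fin N)),
    ((s.sort (· ≤ ·)).map (elemAt b N)).prod

/-- `F^{(N,n)}(y)`: the sum, over all ways to choose `n` distinct tensor positions and
to place `y` at one of them and `b` at the other `n - 1` (with `1` elsewhere), of the
corresponding elementary tensors. -/
def Fsum {A : Type*} [Ring A] [Algebra ℂ A] (b y : A) (N n : ℕ) : ⨂[ℂ] _ : Fin N, A :=
  ∑ s ∈ Finset.powersetCard n (Finset.univ : Finset (Fin N)), ∑ i ∈ s,
    PiTensorProduct.tprod ℂ (fun j => if j = i then y else if j ∈ s then b else 1)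

/-!
Expanding the `m`-th power, `φ^{⊗N}(F^{(N,n)}(y)^m)` becomes a sum over `m`-tuples of marked
`n`-subsets of `Fin N` of products, over the sites `j`, of `φ` applied to the word formed by the
tuple's tensor factors at `j`. Since `φ(b) = φ(y) = 0`, a tuple contributes nothing as soon as
one site is covered by exactly one of its subsets; otherwise every covered site is covered at
least twice, so the tuple covers at most `mn/2` sites. There are `O(N^{⌊mn/2⌋})` such tuples,
each contributing a bounded amount, and the scaling `N^{-(n+1)m/2}` leaves `O(N^{-m/2})`.
-/

open Finset Asymptotics

theorem sum_pow_eq_sum_piFinset {R ι : Type*} [Semiring R] (s : Finset ι) (f : ι → R) (m : ℕ) :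
    (∑ i ∈ s, f i) ^ m =
      ∑ v ∈ Fintype.piFinset fun _ : Fin m => s, (List.ofFn fun k => f (v k)).prod := by
  induction m with
  | zero => simp
  | succ m ih =>
    have hcons := filter_piFinset_eq_map_consEquiv (fun _ : Fin (m + 1) => s) (fun _ => True)
    simp only [filter_true] at hcons
    rw [pow_succ', ih, sum_mul_sum, ← sum_product', hcons, sum_map]
    simp only [Function.Embedding.coeFn_mk, Fin.consEquiv_apply, List.ofFn_succ, Fin.cons_zero,
      Fin.cons_succ, List.prod_cons]
    rfl

theorem List.prod_ofFn_eq_single {M : Type*} [Monoid M] {m : ℕ} (f : Fin m → M)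
    (k₀ : Fin m) (h : ∀ k ≠ k₀, f k = 1) : (List.ofFn f).prod = f k₀ := by
  induction m with
  | zero => exact k₀.elim0
  | succ m ih =>
    rw [List.ofFn_succ, List.prod_cons]
    rcases Fin.eq_zero_or_eq_succ k₀ with rfl | ⟨k₀, rfl⟩
    · rw [List.prod_eq_one (by simpa using fun k => h k.succ (Fin.succ_ne_zero k)), mul_one]
    · rw [h 0 (Fin.succ_ne_zero k₀).symm, one_mul]
      exact ih _ k₀ fun k hk => h k.succ (Fin.succ_injective _ |>.ne hk)

theorem sum_card_filter_mem {ι α : Type*} [Fintype ι] [Fintype α] [DecidableEq α]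
    (s : ι → Finset α) :
    ∑ j, #{k | j ∈ s k} = ∑ k, #(s k) := by
  simp only [card_filter]
  rw [sum_comm]
  simp

theorem exists_card_filter_mem_eq_one {ι α : Type*} [Fintype ι] [Fintype α] [DecidableEq α]
    (s : ι → Finset α) (h : ∑ k, #(s k) < 2 * #(univ.biUnion s)) :
    ∃ j, #{k | j ∈ s k} = 1 := by
  by_contra! hne
  have htwo : ∀ j ∈ univ.biUnion s, 2 ≤ #{k | j ∈ s k} := fun j hj => by
    obtain ⟨k, -, hk⟩ := mem_biUnion.1 hj
    have : 0 < #{k | j ∈ s k} := card_pos.2 ⟨k, by simpa using hk⟩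
    have := hne j
    omega
  have : 2 * #(univ.biUnion s) ≤ ∑ k, #(s k) := calc
    2 * #(univ.biUnion s) = ∑ _j ∈ univ.biUnion s, 2 := by rw [sum_const, smul_eq_mul, mul_comm]
    _ ≤ ∑ j ∈ univ.biUnion s, #{k | j ∈ s k} := sum_le_sum htwo
    _ ≤ ∑ j, #{k | j ∈ s k} := sum_le_sum_of_subset (subset_univ _)
    _ = ∑ k, #(s k) := sum_card_filter_mem s
  omega

theorem card_filter_card_le_le {α : Type*} [Fintype α] (hα : 1 ≤ Fintype.card α) (K : ℕ) :
    #{U : Finset α | #U ≤ K} ≤ (K + 1) * Fintype.card α ^ K := by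
  classical
  have hsub : ({U : Finset α | #U ≤ K} : Finset _) ⊆
      (range (K + 1)).biUnion fun u => powersetCard u univ := fun U hU => by
    simp only [mem_filter, mem_univ, true_and] at hU
    simp [hU]
  calc #{U : Finset α | #U ≤ K}
      ≤ ∑ u ∈ range (K + 1), #(powersetCard u (univ : Finset α)) :=
        (card_le_card hsub).trans card_biUnion_le
    _ ≤ ∑ _u ∈ range (K + 1), Fintype.card α ^ K := sum_le_sum fun u hu => by
        rw [card_powersetCard, card_univ]
        exact (Nat.choose_le_pow _ _).trans
          (Nat.pow_le_pow_right hα (by simpa [Nat.lt_succ_iff] using hu))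
    _ = (K + 1) * Fintype.card α ^ K := by simp

theorem card_filter_piFinset_card_biUnion_le {ι α : Type*} [Fintype α] [DecidableEq α]
    (hα : 1 ≤ Fintype.card α) (T : Finset ι) (supp : ι → Finset α) {m K L : ℕ}
    (hT : ∀ U : Finset α, #U ≤ K → #{p ∈ T | supp p ⊆ U} ≤ L) :
    #{v ∈ Fintype.piFinset (fun _ : Fin m => T) | #(univ.biUnion fun k => supp (v k)) ≤ K} ≤
      (K + 1) * Fintype.card α ^ K * L ^ m := by
  classical
  have hsub : {v ∈ Fintype.piFinset (fun _ : Fin m => T) |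
      #(univ.biUnion fun k => supp (v k)) ≤ K} ⊆
      ({U : Finset α | #U ≤ K} : Finset _).biUnion
        fun U => Fintype.piFinset fun _ => {p ∈ T | supp p ⊆ U} := fun v hv => by
    simp only [mem_filter, Fintype.mem_piFinset] at hv
    exact mem_biUnion.2 ⟨_, by simpa using hv.2, Fintype.mem_piFinset.2 fun k =>
      mem_filter.2 ⟨hv.1 k, subset_biUnion_of_mem (fun k => supp (v k)) (mem_univ k)⟩⟩
  calc _ ≤ ∑ U ∈ ({U : Finset α | #U ≤ K} : Finset _),
        #(Fintype.piFinset fun _ : Fin m => {p ∈ T | supp p ⊆ U}) :=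
        (card_le_card hsub).trans card_biUnion_le
    _ ≤ ∑ _U ∈ ({U : Finset α | #U ≤ K} : Finset _), L ^ m := sum_le_sum fun U hU => by
        rw [Fintype.card_piFinset_const]
        exact Nat.pow_le_pow_left (hT U (by simpa using hU)) m
    _ ≤ (K + 1) * Fintype.card α ^ K * L ^ m := by
        rw [sum_const, smul_eq_mul]
        exact Nat.mul_le_mul_right _ (card_filter_card_le_le hα K)

section ProductState

variable {A : Type*} [Ring A] [Algebra ℂ A] (φ : A →ₗ[ℂ] ℂ) {N m : ℕ}

theorem prodState_tprod (f : Fin N → A) :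
    prodState φ N (PiTensorProduct.tprod ℂ f) = ∏ j, φ (f j) := by
  simp [prodState]

theorem list_prod_ofFn_tprod (f : Fin m → Fin N → A) :
    (List.ofFn fun k => PiTensorProduct.tprod ℂ (f k)).prod =
      PiTensorProduct.tprod ℂ fun j => (List.ofFn fun k => f k j).prod := by
  rw [show (fun k => PiTensorProduct.tprod ℂ (f k)) = PiTensorProduct.tprodMonoidHom ℂ ∘ f
    from rfl, ← List.map_ofFn, ← map_list_prod]
  simp only [PiTensorProduct.tprodMonoidHom_apply]
  congr 1
  funext j
  simp [Pi.list_prod_apply, List.map_ofFn, Function.comp_def]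

theorem prodState_list_prod_ofFn_tprod (f : Fin m → Fin N → A) :
    prodState φ N (List.ofFn fun k => PiTensorProduct.tprod ℂ (f k)).prod =
      ∏ j, φ (List.ofFn fun k => f k j).prod := by
  rw [list_prod_ofFn_tprod, prodState_tprod]

variable {φ} (f : Fin m → Fin N → A) (s : Fin m → Finset (Fin N))

theorem prodState_list_prod_ofFn_tprod_eq_zero (h_one : ∀ k, ∀ j ∉ s k, f k j = 1)
    (h_centered : ∀ k, ∀ j ∈ s k, φ (f k j) = 0) {j : Fin N} (hj : #{k | j ∈ s k} = 1) :
    prodState φ N (List.ofFn fun k => PiTensorProduct.tprod ℂ (f k)).prod = 0 := by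
  obtain ⟨k₀, hk₀⟩ := card_eq_one.1 hj
  have hmem : ∀ k, j ∈ s k ↔ k = k₀ := fun k => by
    simpa using congrArg (k ∈ ·) hk₀
  rw [prodState_list_prod_ofFn_tprod]
  refine prod_eq_zero (mem_univ j) ?_
  rw [List.prod_ofFn_eq_single _ k₀ fun k hk => h_one k j (mt (hmem k).1 hk)]
  exact h_centered k₀ j ((hmem k₀).2 rfl)

theorem norm_prodState_list_prod_ofFn_tprod_le (hφ : φ 1 = 1)
    (h_one : ∀ k, ∀ j ∉ s k, f k j = 1) {C : ℝ}
    (hC : ∀ j, ‖φ (List.ofFn fun k => f k j).prod‖ ≤ C) :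
    ‖prodState φ N (List.ofFn fun k => PiTensorProduct.tprod ℂ (f k)).prod‖ ≤
      C ^ #(univ.biUnion s) := by
  have hout : ∀ j ∉ univ.biUnion s, φ (List.ofFn fun k => f k j).prod = 1 := fun j hj => by
    rw [List.prod_eq_one, hφ]
    simp only [List.mem_ofFn, forall_exists_index]
    rintro _ k rfl
    exact h_one k j fun hk => hj (mem_biUnion.2 ⟨k, mem_univ k, hk⟩)
  rw [prodState_list_prod_ofFn_tprod, ← prod_subset (subset_univ _) fun j _ hj => hout j hj,
    norm_prod, ← prod_const]
  exact prod_le_prod (fun _ _ => norm_nonneg _) fun j _ => hC j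

end ProductState

section MarkedSubsets

variable {A : Type*} {N n : ℕ}

/-- The terms of `Fsum b y N n` are indexed by an `n`-subset `s` together with the position
`i ∈ s` of `y`. -/
def markedSubsets (N n : ℕ) : Finset (Σ _ : Finset (Fin N), Fin N) :=
  (powersetCard n univ).sigma id

def markedFactor [One A] (b y : A) (p : Σ _ : Finset (Fin N), Fin N) (j : Fin N) : A :=
  if j = p.2 then y else if j ∈ p.1 then b else 1

theorem Fsum_eq_sum_markedSubsets [Ring A] [Algebra ℂ A] (b y : A) (N n : ℕ) :
    Fsum b y N n = ∑ p ∈ markedSubsets N n, PiTensorProduct.tprod ℂ (markedFactor b y p) := by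
  rw [Fsum, markedSubsets, sum_sigma]
  rfl

theorem mem_markedSubsets {p : Σ _ : Finset (Fin N), Fin N} :
    p ∈ markedSubsets N n ↔ #p.1 = n ∧ p.2 ∈ p.1 := by
  simp [markedSubsets]

theorem markedFactor_of_notMem [One A] {b y : A} {p : Σ _ : Finset (Fin N), Fin N}
    (hp : p ∈ markedSubsets N n) {j : Fin N} (hj : j ∉ p.1) : markedFactor b y p j = 1 := by
  rw [markedFactor, if_neg (by rintro rfl; exact hj (mem_markedSubsets.1 hp).2), if_neg hj]

theorem markedFactor_mem [One A] (b y : A) (p : Σ _ : Finset (Fin N), Fin N) (j : Fin N) :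
    markedFactor b y p j ∈ ({y, b, 1} : Set A) := by
  unfold markedFactor
  split_ifs <;> simp

theorem map_markedFactor_of_mem [Ring A] [Algebra ℂ A] {φ : A →ₗ[ℂ] ℂ} {b y : A}
    (hb : φ b = 0) (hy : φ y = 0) (p : Σ _ : Finset (Fin N), Fin N) {j : Fin N} (hj : j ∈ p.1) :
    φ (markedFactor b y p j) = 0 := by
  unfold markedFactor
  split_ifs <;> assumption

theorem card_filter_markedSubsets_subset_le (U : Finset (Fin N)) :
    #{p ∈ markedSubsets N n | p.1 ⊆ U} ≤ 2 ^ #U * #U := by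
  have hsub : {p ∈ markedSubsets N n | p.1 ⊆ U} ⊆ U.powerset.sigma id := fun p hp => by
    rw [mem_filter, mem_markedSubsets] at hp
    exact mem_sigma.2 ⟨mem_powerset.2 hp.2, hp.1.2⟩
  calc _ ≤ ∑ s ∈ U.powerset, #s := (card_le_card hsub).trans (card_sigma _ _).le
    _ ≤ ∑ _s ∈ U.powerset, #U := sum_le_sum fun s hs => card_le_card (mem_powerset.1 hs)
    _ = 2 ^ #U * #U := by rw [sum_const, card_powerset, smul_eq_mul]

variable [Ring A] [Algebra ℂ A] {φ : A →ₗ[ℂ] ℂ} {b y : A} {m : ℕ}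
  {v : Fin m → Σ _ : Finset (Fin N), Fin N}

theorem prodState_markedFactor_eq_zero (hb : φ b = 0) (hy : φ y = 0)
    (hv : v ∈ Fintype.piFinset fun _ => markedSubsets N n)
    (hcover : m * n / 2 < #(univ.biUnion fun k => (v k).1)) :
    prodState φ N
      (List.ofFn fun k => PiTensorProduct.tprod ℂ (markedFactor b y (v k))).prod = 0 := by
  rw [Fintype.mem_piFinset] at hv
  have hsum : ∑ k, #(v k).1 = m * n := by simp [(mem_markedSubsets.1 (hv _)).1]
  obtain ⟨j, hj⟩ := exists_card_filter_mem_eq_one (fun k => (v k).1) (by omega)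
  exact prodState_list_prod_ofFn_tprod_eq_zero _ _ (fun k _ => markedFactor_of_notMem (hv k))
    (fun k _ => map_markedFactor_of_mem hb hy _) hj

theorem norm_prodState_markedFactor_le (hφ : φ 1 = 1)
    (hv : v ∈ Fintype.piFinset fun _ => markedSubsets N n) {C : ℝ}
    (hC : ∀ f : Fin m → A, (∀ k, f k ∈ ({y, b, 1} : Set A)) → ‖φ (List.ofFn f).prod‖ ≤ C) :
    ‖prodState φ N (List.ofFn fun k => PiTensorProduct.tprod ℂ (markedFactor b y (v k))).prod‖ ≤
      C ^ #(univ.biUnion fun k => (v k).1) :=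
  norm_prodState_list_prod_ofFn_tprod_le _ _ hφ
    (fun k _ => markedFactor_of_notMem (Fintype.mem_piFinset.1 hv k))
    fun j => hC _ fun k => markedFactor_mem b y (v k) j

end MarkedSubsets

theorem prodState_Fsum_pow_isBigO {A : Type*} [Ring A] [Algebra ℂ A] {φ : A →ₗ[ℂ] ℂ}
    (hφ : φ 1 = 1) {b y : A} (hb : φ b = 0) (hy : φ y = 0) (n m : ℕ) :
    (fun N => prodState φ N (Fsum b y N n ^ m)) =O[atTop] fun N : ℕ => (N : ℝ) ^ (m * n / 2) := by
  set K := m * n / 2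
  obtain ⟨C, hC⟩ := ((Set.Finite.pi' fun _ : Fin m => Set.toFinite ({y, b, 1} : Set A)).image
    fun f => ‖φ (List.ofFn f).prod‖).bddAbove
  set C' := max C 1
  have hC' : ∀ f : Fin m → A, (∀ k, f k ∈ ({y, b, 1} : Set A)) → ‖φ (List.ofFn f).prod‖ ≤ C' :=
    fun f hf => (hC ⟨f, hf, rfl⟩).trans (le_max_left _ _)
  refine IsBigO.of_bound ((K + 1) * (2 ^ K * K) ^ m * C' ^ K) ?_
  filter_upwards [eventually_ge_atTop 1] with N hN
  set V := Fintype.piFinset fun _ : Fin m => markedSubsets N n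
  set cover := fun v : Fin m → Σ _ : Finset (Fin N), Fin N => univ.biUnion fun k => (v k).1
  have hcard : #{v ∈ V | #(cover v) ≤ K} ≤ (K + 1) * N ^ K * (2 ^ K * K) ^ m := by
    simpa using card_filter_piFinset_card_biUnion_le (by simpa using hN) (markedSubsets N n)
      Sigma.fst (m := m) fun U hU => (card_filter_markedSubsets_subset_le U).trans
        (Nat.mul_le_mul (Nat.pow_le_pow_right two_pos hU) hU)
  rw [Fsum_eq_sum_markedSubsets, sum_pow_eq_sum_piFinset, map_sum, ← sum_filter_of_ne
    fun v hv hne => not_lt.1 fun hK => hne (prodState_markedFactor_eq_zero hb hy hv hK)]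
  calc _ ≤ ∑ v ∈ V with #(cover v) ≤ K, C' ^ K := norm_sum_le_of_le _ fun v hv =>
        (norm_prodState_markedFactor_le hφ (mem_filter.1 hv).1 hC').trans
          (pow_le_pow_right₀ (le_max_right _ _) (mem_filter.1 hv).2)
    _ ≤ ((K + 1) * N ^ K * (2 ^ K * K) ^ m : ℕ) * C' ^ K := by
        rw [sum_const, nsmul_eq_mul]
        gcongr
    _ = _ := by
        rw [Real.norm_of_nonneg (by positivity)]
        push_cast
        ring

theorem rpow_pow_mul_pow_le {x : ℝ} (hx : 1 ≤ x) (n m : ℕ) :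
    (x ^ (-((n : ℝ) + 1) / 2)) ^ m * x ^ (m * n / 2) ≤ x ^ (-(m : ℝ) / 2) := by
  have hK : ((m * n / 2 : ℕ) : ℝ) ≤ m * n / 2 := by
    simpa using Nat.cast_div_le (α := ℝ) (m := m * n) (n := 2)
  rw [← Real.rpow_mul_natCast (by positivity), ← Real.rpow_natCast x (m * n / 2),
    ← Real.rpow_add (by positivity)]
  exact Real.rpow_le_rpow_of_exponent_le hx (by nlinarith)

theorem Fsum_tendsto_zero_general
    {A : Type*} [Ring A] [Algebra ℂ A]
    (φ : A →ₗ[ℂ] ℂ) (hφ_unital : φ 1 = 1)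
    (b : A) (hb1 : φ b = 0) (hb2 : φ (b * b) = 1)
    (n : ℕ) (m : ℕ) (hm : 1 ≤ m) :
    Tendsto
      (fun N : ℕ =>
        prodState φ N
          (((((N : ℝ) ^ (-((n : ℝ) + 1) / 2) : ℝ) : ℂ) • Fsum b (b * b - 1) N n) ^ m))
      atTop (𝓝 0) ∧
    (fun N : ℕ =>
        prodState φ N
          (((((N : ℝ) ^ (-((n : ℝ) + 1) / 2) : ℝ) : ℂ) • Fsum b (b * b - 1) N n) ^ m))
      =O[atTop] (fun N : ℕ => (N : ℝ) ^ (-(m : ℝ) / 2)) := by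
  have hy : φ (b * b - 1) = 0 := by rw [map_sub, hb2, hφ_unital, sub_self]
  have hscale : (fun N : ℕ => ((((N : ℝ) ^ (-((n : ℝ) + 1) / 2) : ℝ) : ℂ)) ^ m) =O[atTop]
      fun N : ℕ => ((N : ℝ) ^ (-((n : ℝ) + 1) / 2)) ^ m :=
    isBigO_of_le _ fun N => by simp
  have hrate : (fun N : ℕ => ((N : ℝ) ^ (-((n : ℝ) + 1) / 2)) ^ m • (N : ℝ) ^ (m * n / 2))
      =O[atTop] fun N : ℕ => (N : ℝ) ^ (-(m : ℝ) / 2) := by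
    refine IsBigO.of_bound 1 ?_
    filter_upwards [eventually_ge_atTop 1] with N hN
    have hN' : (1 : ℝ) ≤ N := by exact_mod_cast hN
    rw [smul_eq_mul, one_mul, Real.norm_of_nonneg (by positivity),
      Real.norm_of_nonneg (by positivity)]
    exact rpow_pow_mul_pow_le hN' n m
  have hO := ((hscale.smul (prodState_Fsum_pow_isBigO hφ_unital hb1 hy n m)).trans
    hrate).congr_left fun N => by rw [← map_smul, ← smul_pow]
  refine ⟨hO.trans_tendsto ?_, hO⟩
  simpa [neg_div, Function.comp_def] using
    (tendsto_rpow_neg_atTop (by positivity : (0 : ℝ) < m / 2)).comp tendsto_natCast_atTop_atTop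

/-- Lemma 3.5: for a self-adjoint `b` with `φ(b) = 0` and `φ(b²) = 1`, the moments of
`z_{nN} = F^{(N,n)}(b² - 1)/N^{(n+1)/2}` (w.r.t. the product states `φ^{⊗N}`) tend to
`0`; indeed the `m`-th moment is `O(N^{-m/2})`. -/
theorem Fsum_tendsto_zero
    {A : Type*} [Ring A] [Algebra ℂ A] [StarRing A] [StarModule ℂ A]
    (φ : A →ₗ[ℂ] ℂ) (hφ_unital : φ 1 = 1) (hφ_pos : ∀ a, 0 ≤ φ (star a * a))
    (b : A) (hb : star b = b) (hb1 : φ b = 0) (hb2 : φ (b * b) = 1)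
    (n : ℕ) (hn : 1 ≤ n) (m : ℕ) (hm : 1 ≤ m) :
    Tendsto
      (fun N : ℕ =>
        prodState φ N
          (((((N : ℝ) ^ (-((n : ℝ) + 1) / 2) : ℝ) : ℂ) • Fsum b (b * b - 1) N n) ^ m))
      atTop (𝓝 0) ∧
    (fun N : ℕ =>
        prodState φ N
          (((((N : ℝ) ^ (-((n : ℝ) + 1) / 2) : ℝ) : ℂ) • Fsum b (b * b - 1) N n) ^ m))
      =O[atTop] (fun N : ℕ => (N : ℝ) ^ (-(m : ℝ) / 2)) :=
  Fsum_tendsto_zero_general φ hφ_unital b hb1 hb2 n m hm
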